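/- Let q, s, n' > 0 and let G be a graph containing a (q, s, n') connected tripartite cover. Then G contains a square cycle on at least n' vertices; that is, there exist an integer l ≥ n' and distinct vertices w₀, w₁, …, w_{l−1} of G such that w_i is adjacent to w_{(i+1) mod l} and to w_{(i+2) mod l} for every i. -/

import Mathlib

/-- `l` is a square path in `G`. -/
def IsSquarePath {V : Type*} (G : SimpleGraph V) (l : List V) : Prop :=
  l.Nodup ∧ ∀ i j : Fin l.length,
    (i.val + 1 = j.val ∨ i.val + 2 = j.val) → G.Adj (l.get i) (l.get j)

/-- A `(q, s, n')` connected tripartite cover of `G`. -/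
def ConnTripartiteCover {V : Type*} [Fintype V] [DecidableEq V] (G : SimpleGraph V)
    (q s n' : ℝ) : Prop :=
  ∃ (m : ℕ) (A : Fin m → Fin 3 → Finset V) (t : Fin m → ℕ) (P : Fin m → List V),
    (∀ i, ⌊s⌋₊ ≤ t i ∧ t i ≤ ⌈2 * s⌉₊) ∧
    (∀ i a, (A i a).card = t i) ∧
    (∀ i a j b, (i, a) ≠ (j, b) → Disjoint (A i a) (A j b)) ∧
    (∀ i, ∀ a b : Fin 3, a ≠ b → ∀ u ∈ A i a, ∀ v ∈ A i b, G.Adj u v) ∧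
    n' ≤ ((∑ i, 3 * t i : ℕ) : ℝ) ∧
    (∀ i, IsSquarePath G (P i)) ∧
    (∀ i j, i ≠ j → (P i).Disjoint (P j)) ∧
    (∀ i : Fin m, ∃ (u v : Fin 3 → V) (Q : List V),
      P i = [u 0, u 1, u 2] ++ Q ++ [v 0, v 1, v 2] ∧
      (Q.length : ℝ) ≤ q ∧
      (∀ a, u a ∈ A i a) ∧
      (∀ a, v a ∈ A ⟨(i.val + 1) % m, Nat.mod_lt _ i.pos⟩ a) ∧
      (∀ x ∈ Q, ∀ j a, x ∉ A j a))

/-!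
Order each tripartite piece `K³(tᵢ)` row by row, `x₁ y₁ z₁ x₂ y₂ z₂ …`, taking one vertex from
each colour class per row: any two vertices at distance one or two lie in different classes, so
this is a square path through all of `K³(tᵢ)`. The rows can be chosen so that the path starts
with the last triple of the connecting path `Pᵢ₋₁` and ends with the first triple of `Pᵢ`
(the two triples are disjoint, so every class has at least two vertices). Alternating these
paths with the interiors of the `Pᵢ` gives a cyclic sequence of vertices, and since square
adjacency only looks two steps ahead, it suffices to check it across each junction, where it
is inherited from `Pᵢ`.
-/

section SquareWalks

variable {V : Type*} {G : SimpleGraph V}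

def IsSquareWalk (G : SimpleGraph V) (l : List V) : Prop :=
  ∀ i j (hi : i < l.length) (hj : j < l.length), (i + 1 = j ∨ i + 2 = j) → G.Adj l[i] l[j]

theorem IsSquarePath.isSquareWalk {l : List V} (h : IsSquarePath G l) : IsSquareWalk G l :=
  fun i j hi hj hij => h.2 ⟨i, hi⟩ ⟨j, hj⟩ hij

namespace IsSquareWalk

theorem of_prefix {l₁ l₂ : List V} (h : l₁ <+: l₂) (hw : IsSquareWalk G l₂) :
    IsSquareWalk G l₁ := by
  intro i j hi hj hij
  rw [h.getElem hi, h.getElem hj]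
  exact hw i j _ _ hij

theorem append {l₁ l₂ : List V} (h₁ : IsSquareWalk G (l₁ ++ l₂.take 2))
    (h₂ : IsSquareWalk G l₂) : IsSquareWalk G (l₁ ++ l₂) := by
  intro i j hi hj hij
  simp only [List.length_append] at hi hj
  by_cases hil : l₁.length ≤ i
  · rw [List.getElem_append_right hil, List.getElem_append_right (by omega)]
    exact h₂ _ _ _ _ (by omega)
  · have hpre : l₁ ++ l₂.take 2 <+: l₁ ++ l₂ :=
      (List.prefix_append_right_inj l₁).2 (List.take_prefix 2 l₂)
    have hj' : j < (l₁ ++ l₂.take 2).length := by simp; omega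
    rw [← hpre.getElem (by simp; omega), ← hpre.getElem hj']
    exact h₁ i j _ hj' hij

theorem link {W W' U Q V' : List V} (hW : IsSquareWalk G W) (hU : U <:+ W) (hV : V' <+: W')
    (hU₂ : 2 ≤ U.length) (hV₂ : 2 ≤ V'.length) (hP : IsSquareWalk G (U ++ Q ++ V')) :
    IsSquareWalk G (W ++ Q ++ W'.take 2) := by
  obtain ⟨Y, rfl⟩ := hU
  have htake : W'.take 2 = V'.take 2 := by
    obtain ⟨R, rfl⟩ := hV
    exact List.take_append_of_le_length hV₂
  simp only [htake, List.append_assoc]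
  refine append ?_ (hP.of_prefix ?_)
  · rw [List.take_append_of_le_length hU₂]
    exact hW.of_prefix ((List.prefix_append_right_inj Y).2 (List.take_prefix 2 U))
  · rw [List.append_assoc]
    exact (List.prefix_append_right_inj U).2
      ((List.prefix_append_right_inj Q).2 (List.take_prefix 2 V'))

theorem adj_get_of_append_take {l : List V} (h : IsSquareWalk G (l ++ l.take 2))
    (hl : 2 ≤ l.length) (i j : Fin l.length)
    (hij : (i.val + 1) % l.length = j.val ∨ (i.val + 2) % l.length = j.val) :
    G.Adj (l.get i) (l.get j) := by
  have hwrap : ∀ k (hk : k < l.length + 2),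
      (l ++ l.take 2)[k]'(by simp; omega) = l[k % l.length]'(Nat.mod_lt _ (by omega)) := by
    intro k hk
    by_cases hkl : k < l.length
    · simp only [List.getElem_append_left hkl, Nat.mod_eq_of_lt hkl]
    · rw [List.getElem_append_right (by omega), List.getElem_take]
      congr 1
      rw [Nat.mod_eq_sub_mod (by omega), Nat.mod_eq_of_lt (by omega)]
  obtain ⟨d, hd, hj⟩ : ∃ d, (d = 1 ∨ d = 2) ∧ (i.val + d) % l.length = j.val := by
    rcases hij with h1 | h2
    · exact ⟨1, by omega, h1⟩
    · exact ⟨2, by omega, h2⟩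
  have := h i (i + d) (by simp; omega) (by simp; omega) (by omega)
  rw [hwrap i (by omega), hwrap (i + d) (by omega)] at this
  simpa [hj, Nat.mod_eq_of_lt i.isLt] using this

end IsSquareWalk

theorem isSquareWalk_flatMap_range {B : ℕ → List V} (hlen : ∀ k, 2 ≤ (B k).length)
    (hB : ∀ k, IsSquareWalk G (B k ++ (B (k + 1)).take 2)) (n : ℕ) :
    IsSquareWalk G ((List.range n).flatMap B ++ (B n).take 2) := by
  induction n with
  | zero => simpa using (hB 0).of_prefix ((List.take_prefix 2 _).trans (List.prefix_append _ _))
  | succ n ih =>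
    rw [List.range_succ, List.flatMap_append, List.flatMap_singleton, List.append_assoc]
    refine IsSquareWalk.append ?_ (hB n)
    rwa [List.take_append_of_le_length (hlen n)]

open Fin.NatCast in
theorem exists_squareCycle_of_blocks {n : ℕ} (B : Fin (n + 1) → List V)
    (hlen : ∀ i, 2 ≤ (B i).length) (hB : ∀ i, IsSquareWalk G (B i ++ (B (i + 1)).take 2))
    (hnd : ∀ i, (B i).Nodup) (hdisj : Pairwise fun i j => (B i).Disjoint (B j)) :
    ∃ (l : ℕ) (w : Fin l → V), l = ∑ i, (B i).length ∧ Function.Injective w ∧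
      ∀ i j : Fin l, ((i.val + 1) % l = j.val ∨ (i.val + 2) % l = j.val) →
        G.Adj (w i) (w j) := by
  set C := (List.finRange (n + 1)).flatMap B with hCdef
  have hC : C = (List.range (n + 1)).flatMap fun k : ℕ => B k := by
    rw [← List.map_coe_finRange_eq_range, List.flatMap_map]
    simp [C]
  have htake : C.take 2 = (B 0).take 2 := by
    rw [hCdef, List.finRange_succ, List.flatMap_cons, List.take_append_of_le_length (hlen 0)]
  have hwalk : IsSquareWalk G (C ++ C.take 2) := by
    have := isSquareWalk_flatMap_range (B := fun k : ℕ => B k) (fun k => hlen _)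
      (fun k => by simpa using hB k) (n + 1)
    rwa [← hC, Fin.natCast_self, ← htake] at this
  have hlength : C.length = ∑ i, (B i).length := by
    simp [C, List.length_flatMap, Fin.sum_univ_def]
  refine ⟨C.length, C.get, hlength,
    List.nodup_iff_injective_get.1 (List.nodup_flatMap.2
      ⟨fun i _ => hnd i, (List.nodup_finRange _).imp fun h => hdisj h⟩),
    hwalk.adj_get_of_append_take ?_⟩
  rw [hlength]
  exact (hlen 0).trans (Finset.single_le_sum (f := fun i => (B i).length) (fun i _ => Nat.zero_le _)
    (Finset.mem_univ 0))

theorem Finset.exists_injective_fin_first_last {X : Finset V} {t : ℕ} (hX : X.card = t)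
    {x y : V} (hx : x ∈ X) (hy : y ∈ X) (hxy : x ≠ y) :
    ∃ f : Fin t → V, Function.Injective f ∧ (∀ r, f r ∈ X) ∧
      ∀ r : Fin t, (r.val = 0 → f r = x) ∧ (r.val + 1 = t → f r = y) := by
  classical
  set L := x :: (((X.erase x).erase y).toList ++ [y])
  have hnd : L.Nodup := by
    simp +contextual [L, List.nodup_append, hxy, Finset.nodup_toList]
  have hmem : L.toFinset = X := by
    ext z
    by_cases hzx : z = x <;> by_cases hzy : z = y <;> simp_all [L]
  have hlen : L.length = t := by rw [← hX, ← hmem, List.toFinset_card_of_nodup hnd]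
  refine ⟨fun r => L[r.val], fun r r' h => Fin.ext ((hnd.getElem_inj_iff).1 h),
    fun r => hmem ▸ List.mem_toFinset.2 (List.getElem_mem _), fun r => ⟨?_, ?_⟩⟩
  · intro hr; simp [L, hr]
  · intro hr
    simp only [L, List.length_cons, List.length_append, List.length_nil,
      Finset.length_toList] at hlen
    simp only [L, List.getElem_cons, dif_neg (show r.val ≠ 0 by omega)]
    rw [List.getElem_append_right (by simp; omega)]
    simp

section Interleave

variable {t : ℕ}

def interleave3 (f : Fin 3 → Fin t → V) : List V :=
  List.ofFn fun k : Fin (3 * t) => f ⟨k % 3, by omega⟩ ⟨k / 3, by omega⟩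

@[simp]
theorem length_interleave3 (f : Fin 3 → Fin t → V) : (interleave3 f).length = 3 * t :=
  List.length_ofFn

theorem getElem_interleave3 (f : Fin 3 → Fin t → V) {k : ℕ} (hk : k < (interleave3 f).length) :
    (interleave3 f)[k] = f ⟨k % 3, by omega⟩ ⟨k / 3, by simp at hk; omega⟩ :=
  List.getElem_ofFn hk

theorem mem_interleave3 {f : Fin 3 → Fin t → V} {z : V} (hz : z ∈ interleave3 f) :
    ∃ a r, f a r = z := by
  obtain ⟨k, rfl⟩ := List.mem_ofFn.1 hz
  exact ⟨_, _, rfl⟩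

theorem nodup_interleave3 {f : Fin 3 → Fin t → V} (hf : Function.Injective (Function.uncurry f)) :
    (interleave3 f).Nodup := by
  refine List.nodup_ofFn.2 fun k k' h => ?_
  have := Prod.ext_iff.1 (hf (a₁ := (_, _)) (a₂ := (_, _)) h)
  simp only [Fin.mk.injEq] at this
  ext; omega

theorem isSquareWalk_interleave3 {f : Fin 3 → Fin t → V}
    (hadj : ∀ a b, a ≠ b → ∀ r r', G.Adj (f a r) (f b r')) :
    IsSquareWalk G (interleave3 f) := by
  intro i j hi hj hij
  rw [getElem_interleave3, getElem_interleave3]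
  exact hadj _ _ (by simp only [ne_eq, Fin.mk.injEq]; omega) _ _

theorem interleave3_prefix (f : Fin 3 → Fin t → V) (r : Fin t) (hr : r.val = 0) :
    [f 0 r, f 1 r, f 2 r] <+: interleave3 f := by
  refine List.prefix_iff_getElem.2 ⟨by simp; omega, fun i hi => ?_⟩
  rw [getElem_interleave3]
  simp only [List.length_cons, List.length_nil] at hi
  interval_cases i <;> exact congrArg₂ f (Fin.ext rfl) (Fin.ext (by simp [hr]))

theorem interleave3_suffix (f : Fin 3 → Fin t → V) (r : Fin t) (hr : r.val + 1 = t) :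
    [f 0 r, f 1 r, f 2 r] <:+ interleave3 f := by
  refine List.suffix_iff_getElem.2 ⟨by simp; omega, fun i hi => ?_⟩
  rw [getElem_interleave3]
  simp only [List.length_cons, List.length_nil] at hi
  interval_cases i <;> exact congrArg₂ f (Fin.ext (by simp; omega)) (Fin.ext (by simp; omega))

end Interleave

theorem exists_isSquarePath_tripartite {X : Fin 3 → Finset V} {t : ℕ}
    (hcard : ∀ a, (X a).card = t) (hdisj : ∀ a b, a ≠ b → Disjoint (X a) (X b))
    (hadj : ∀ a b, a ≠ b → ∀ x ∈ X a, ∀ y ∈ X b, G.Adj x y)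
    {x y : Fin 3 → V} (hx : ∀ a, x a ∈ X a) (hy : ∀ a, y a ∈ X a) (hxy : ∀ a, x a ≠ y a) :
    ∃ W : List V, IsSquarePath G W ∧ W.length = 3 * t ∧ (∀ z ∈ W, ∃ a, z ∈ X a) ∧
      [x 0, x 1, x 2] <+: W ∧ [y 0, y 1, y 2] <:+ W := by
  choose f hf_inj hf_mem hf_ends using fun a =>
    Finset.exists_injective_fin_first_last (hcard a) (hx a) (hy a) (hxy a)
  have ht : 0 < t := hcard 0 ▸ Finset.card_pos.2 ⟨_, hx 0⟩
  have hinj : Function.Injective (Function.uncurry f) := by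
    rintro ⟨a, r⟩ ⟨b, r'⟩ (h : f a r = f b r')
    obtain rfl : a = b := by
      by_contra hab
      exact Finset.disjoint_left.1 (hdisj a b hab) (hf_mem a r) (h ▸ hf_mem b r')
    rw [hf_inj a h]
  refine ⟨interleave3 f, ⟨nodup_interleave3 hinj, fun i j hij => ?_⟩, length_interleave3 f,
    fun z hz => ?_, ?_, ?_⟩
  · exact isSquareWalk_interleave3 (fun a b hab r r' => hadj a b hab _ (hf_mem a r) _ (hf_mem b r'))
      i j i.isLt j.isLt hij
  · obtain ⟨a, r, rfl⟩ := mem_interleave3 hz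
    exact ⟨a, hf_mem a r⟩
  · simpa only [(hf_ends _ ⟨0, ht⟩).1 rfl] using interleave3_prefix f ⟨0, ht⟩ rfl
  · simpa only [(hf_ends _ ⟨t - 1, by omega⟩).2 (by simp; omega)] using
      interleave3_suffix f ⟨t - 1, by omega⟩ (by simp; omega)

theorem ne_of_mem_of_mem_of_eq_append {ι : Type*} {P U Q W : ι → List V}
    (hnd : ∀ i, (P i).Nodup) (hdisj : Pairwise fun i j => (P i).Disjoint (P j))
    (hP : ∀ i, P i = U i ++ Q i ++ W i) {i j : ι} {x y : V} (hx : x ∈ U i) (hy : y ∈ W j) :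
    x ≠ y := by
  rintro rfl
  by_cases hij : i = j
  · subst hij
    have := hnd i
    rw [hP i, List.nodup_append] at this
    exact this.2.2 _ (List.mem_append_left _ hx) _ hy rfl
  · refine hdisj hij (a := x) ?_ ?_
    · rw [hP i]; exact List.mem_append_left _ (List.mem_append_left _ hx)
    · rw [hP j]; exact List.mem_append_right _ hy

theorem pairwise_disjoint_append {ι : Type*} {W Q : ι → List V} {X : ι → Set V}
    (hW : ∀ i, ∀ z ∈ W i, z ∈ X i) (hX : Pairwise fun i j => Disjoint (X i) (X j))
    (hQX : ∀ i j, ∀ z ∈ Q i, z ∉ X j) (hQ : Pairwise fun i j => (Q i).Disjoint (Q j)) :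
    Pairwise fun i j => (W i ++ Q i).Disjoint (W j ++ Q j) := by
  intro i j hij z hzi hzj
  rcases List.mem_append.1 hzi with hzi | hzi <;> rcases List.mem_append.1 hzj with hzj | hzj
  · exact Set.disjoint_left.1 (hX hij) (hW i z hzi) (hW j z hzj)
  · exact hQX j i z hzj (hW i z hzi)
  · exact hQX i j z hzi (hW j z hzj)
  · exact hQ hij hzi hzj

end SquareWalks

theorem stmt14_general (q s n' : ℝ)
    (V : Type) [Fintype V] [DecidableEq V] (G : SimpleGraph V)
    (h : ConnTripartiteCover G q s n') :
    ∃ (l : ℕ) (w : Fin l → V), n' ≤ l ∧ Function.Injective w ∧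
      ∀ i j : Fin l, ((i.val + 1) % l = j.val ∨ (i.val + 2) % l = j.val) →
        G.Adj (w i) (w j) := by
  obtain ⟨m, A, t, P, -, hcard, hdisj, hadj, hsum, hP, hPdisj, hends⟩ := h
  rcases m with _ | n
  · exact ⟨0, Fin.elim0, by simpa using hsum, fun i => i.elim0, fun i => i.elim0⟩
  choose u v Q hPeq _ hu hv hQ using hends
  have hsucc : ∀ i : Fin (n + 1),
      (⟨(i.val + 1) % (n + 1), Nat.mod_lt _ i.pos⟩ : Fin (n + 1)) = i + 1 :=
    fun i => by ext; simp [Fin.val_add]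
  replace hv : ∀ i a, v (i - 1) a ∈ A i a := fun i a => by
    simpa only [hsucc, sub_add_cancel] using hv (i - 1) a
  have hQP : ∀ i, Q i <:+: P i := fun i => hPeq i ▸ List.infix_append _ _ _
  have hmem_triple : ∀ (f : Fin 3 → V) a, f a ∈ [f 0, f 1, f 2] := fun f a => by
    fin_cases a <;> simp
  -- `W i` runs through all of `K³(tᵢ)`, from the last triple of `P (i - 1)` to the first of `P i`
  choose W hW hWlen hWmem hWpre hWsuf using fun i =>
    exists_isSquarePath_tripartite (G := G) (hcard i)
      (fun a b hab => hdisj i a i b (by simpa using hab)) (hadj i) (hv i) (hu i)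
      (fun a => (ne_of_mem_of_mem_of_eq_append (fun i => (hP i).1) hPdisj hPeq
        (hmem_triple (u i) a) (hmem_triple (v (i - 1)) a)).symm)
  have hlen : ∀ i, 2 ≤ (W i ++ Q i).length := fun i => by
    simpa using ((hWpre i).length_le.trans' (by simp)).trans (by simp)
  have hlink : ∀ i, IsSquareWalk G (W i ++ Q i ++ (W (i + 1) ++ Q (i + 1)).take 2) := fun i => by
    refine (hW i).isSquareWalk.link (hWsuf i) ((hWpre (i + 1)).trans (List.prefix_append _ _))
      (by simp) (by simp) ?_
    simpa [hPeq] using (hP i).isSquareWalk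
  have hnd : ∀ i, (W i ++ Q i).Nodup := fun i =>
    List.nodup_append.2 ⟨(hW i).1, (hP i).1.sublist (hQP i).sublist, fun z hz z' hz' hzz => by
      obtain ⟨a, ha⟩ := hWmem i z hz
      exact hQ i z' hz' i a (hzz ▸ ha)⟩
  have hdisj_blocks : Pairwise fun i j => (W i ++ Q i).Disjoint (W j ++ Q j) :=
    pairwise_disjoint_append (X := fun i => {z | ∃ a, z ∈ A i a}) hWmem
      (fun i j hij => Set.disjoint_left.2 fun z ⟨a, ha⟩ ⟨b, hb⟩ =>
        Finset.disjoint_left.1 (hdisj i a j b (by simp [hij])) ha hb)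
      (fun i j z hz ⟨a, ha⟩ => hQ i z hz j a ha)
      fun i j hij z hzi hzj => hPdisj i j hij ((hQP i).subset hzi) ((hQP j).subset hzj)
  obtain ⟨l, w, rfl, hw, hcycle⟩ :=
    exists_squareCycle_of_blocks (G := G) _ hlen hlink hnd hdisj_blocks
  exact ⟨_, w, hsum.trans (Nat.cast_le.2 (Finset.sum_le_sum fun i _ => by simp [hWlen])), hw,
    hcycle⟩

theorem stmt14 (q s n' : ℝ) (hq : 0 < q) (hs : 0 < s) (hn' : 0 < n')
    (V : Type) [Fintype V] [DecidableEq V] (G : SimpleGraph V)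
    (h : ConnTripartiteCover G q s n') :
    ∃ (l : ℕ) (w : Fin l → V), n' ≤ l ∧ Function.Injective w ∧
      ∀ i j : Fin l, ((i.val + 1) % l = j.val ∨ (i.val + 2) % l = j.val) →
        G.Adj (w i) (w j) :=
  stmt14_general q s n' V G h
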